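/- arXiv:2401.15416 — 3 statements merged into one kernel-verified Lean document; each statement's English description precedes it below -/
import Mathlib

section
/- For every integer p and every real t, the principal value limit lim_{ε→0⁺} (1/2π) ∫_{ε ≤ |u| ≤ π} e^{i p (t−u)} · cot(u/2) du exists and equals −i · sgn(p) · e^{i p t}, where sgn(p) is 1 if p > 0, 0 if p = 0, and −1 if p < 0. -/
/-!
Pairing `u` with `-u` turns the integrand into `-2i e^{ipt} sin(pu) cot(u/2)`, and
`sin(pu) cot(u/2)` is the trigonometric polynomial `sgn p · ∑_{k < |p|} (cos ku + cos (k+1)u)`.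
So the principal value is the limit of integrals over `[ε, π]` of a continuous function, i.e. its
integral over `[0, π]`, where only the constant term survives and contributes `sgn p · π`.
-/

open MeasureTheory Real Set Filter Topology Finset

lemma sin_add_sub_sin_mul_cos_half (a u : ℝ) :
    (sin (a + u) - sin a) * cos (u / 2) = (cos a + cos (a + u)) * sin (u / 2) := by
  rw [sin_sub_sin, cos_add_cos, show (a + u - a) / 2 = u / 2 by ring,
    show (a + u + a) / 2 = a + u / 2 by ring, show (a + (a + u)) / 2 = a + u / 2 by ring,
    show (a - (a + u)) / 2 = -(u / 2) by ring, cos_neg]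
  ring

lemma sin_nat_mul_mul_cos_half (n : ℕ) (u : ℝ) :
    sin (n * u) * cos (u / 2) =
      (∑ k ∈ range n, (cos (k * u) + cos ((k + 1) * u))) * sin (u / 2) := by
  induction n with
  | zero => simp
  | succ n ih =>
    have step := sin_add_sub_sin_mul_cos_half (n * u) u
    rw [show (n : ℝ) * u + u = (n + 1) * u by ring] at step
    push_cast
    rw [sum_range_succ]
    linear_combination ih + step

noncomputable def sinCotKernel (p : ℤ) (u : ℝ) : ℝ :=
  p.sign * ∑ k ∈ range p.natAbs, (cos (k * u) + cos ((k + 1) * u))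

@[fun_prop]
lemma continuous_sinCotKernel (p : ℤ) : Continuous (sinCotKernel p) := by
  unfold sinCotKernel
  fun_prop

lemma sin_int_mul_mul_cos_half (p : ℤ) (u : ℝ) :
    sin (p * u) * cos (u / 2) = sinCotKernel p u * sin (u / 2) := by
  obtain ⟨n, rfl | rfl⟩ := Int.eq_nat_or_neg p <;> rcases n with _ | n
  · simp [sinCotKernel]
  · have h := sin_nat_mul_mul_cos_half (n + 1) u
    simp only [sinCotKernel, Int.natAbs_natCast, Int.sign_natCast_of_ne_zero n.succ_ne_zero]
    push_cast at h ⊢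
    linear_combination h
  · simp [sinCotKernel]
  · have h := sin_nat_mul_mul_cos_half (n + 1) u
    simp only [sinCotKernel, Int.natAbs_neg, Int.natAbs_natCast, Int.sign_neg,
      Int.sign_natCast_of_ne_zero n.succ_ne_zero]
    push_cast at h ⊢
    rw [neg_mul, sin_neg]
    linear_combination -h

lemma integral_cos_nat_mul (k : ℕ) :
    ∫ x in (0 : ℝ)..π, cos (k * x) = if k = 0 then π else 0 := by
  split_ifs with hk
  · simp [hk]
  · have hk' : (k : ℝ) ≠ 0 := by exact_mod_cast hk
    rw [intervalIntegral.integral_comp_mul_left cos hk', integral_cos, mul_zero, sin_zero,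
      sin_nat_mul_pi]
    simp

lemma integral_sinCotKernel (p : ℤ) : ∫ u in (0 : ℝ)..π, sinCotKernel p u = p.sign * π := by
  have hint (k : ℕ) :
      IntervalIntegrable (fun x => cos (k * x) + cos ((k + 1) * x)) volume 0 π :=
    (by fun_prop : Continuous _).intervalIntegrable _ _
  have hterm (k : ℕ) : ∫ x in (0 : ℝ)..π, (cos (k * x) + cos ((k + 1) * x)) =
      if k = 0 then π else 0 := by
    have h := integral_cos_nat_mul (k + 1)
    push_cast at h
    rw [intervalIntegral.integral_add, integral_cos_nat_mul, h]
    · simp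
    all_goals exact (by fun_prop : Continuous _).intervalIntegrable _ _
  rcases eq_or_ne p 0 with rfl | hp
  · simp [sinCotKernel]
  obtain ⟨n, hn⟩ := Nat.exists_eq_succ_of_ne_zero (Int.natAbs_ne_zero.mpr hp)
  simp only [sinCotKernel, intervalIntegral.integral_const_mul]
  rw [intervalIntegral.integral_finsetSum fun k _ => hint k, hn, sum_range_succ']
  simp only [hterm, Nat.add_one_ne_zero, if_false, if_true, sum_const_zero, zero_add]

section

variable {E : Type*} [NormedAddCommGroup E] [NormedSpace ℝ E]

lemma setIntegral_abs_mem_Icc_eq_integral_add_neg {f : ℝ → E} {a b : ℝ} (ha : 0 < a)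
    (hab : a ≤ b) (hf_neg : IntegrableOn f (Icc (-b) (-a))) (hf_pos : IntegrableOn f (Icc a b)) :
    ∫ u in {u | a ≤ |u| ∧ |u| ≤ b}, f u = ∫ u in a..b, (f u + f (-u)) := by
  have hset : {u | a ≤ |u| ∧ |u| ≤ b} = Icc (-b) (-a) ∪ Icc a b := by
    ext u
    simp only [mem_ofPred_eq, mem_union, Set.mem_Icc, le_abs, abs_le]
    constructor
    · rintro ⟨h | h, _, _⟩
      · right; constructor <;> linarith
      · left; constructor <;> linarith
    · rintro (⟨_, _⟩ | ⟨_, _⟩)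
      · exact ⟨Or.inr (by linarith), by linarith, by linarith⟩
      · exact ⟨Or.inl (by linarith), by linarith, by linarith⟩
  have hdisj : Disjoint (Icc (-b) (-a)) (Icc a b) :=
    disjoint_left.mpr fun x hx hx' => by linarith [hx.2, hx'.1]
  have hf_pos' : IntervalIntegrable f volume a b :=
    (intervalIntegrable_iff_integrableOn_Icc_of_le hab).mpr hf_pos
  have hf_neg' : IntervalIntegrable (fun u => f (-u)) volume a b := by
    have h : IntervalIntegrable f volume (-b) (-a) :=
      (intervalIntegrable_iff_integrableOn_Icc_of_le (by linarith)).mpr hf_neg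
    simpa only [neg_neg] using ((IntervalIntegrable.iff_comp_neg).mp h).symm
  rw [hset, setIntegral_union hdisj measurableSet_Icc hf_neg hf_pos, integral_Icc_eq_integral_Ioc,
    integral_Icc_eq_integral_Ioc, ← intervalIntegral.integral_of_le (by linarith),
    ← intervalIntegral.integral_of_le hab, ← intervalIntegral.integral_comp_neg,
    add_comm, intervalIntegral.integral_add hf_pos' hf_neg']

lemma Continuous.tendsto_intervalIntegral_left {f : ℝ → E} (hf : Continuous f) (a b : ℝ) :
    Tendsto (fun x => ∫ t in x..b, f t) (𝓝 a) (𝓝 (∫ t in a..b, f t)) := by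
  have : Continuous fun x => ∫ t in x..b, f t := by
    simp only [intervalIntegral.integral_symm b]
    exact (intervalIntegral.continuous_primitive (fun _ _ => hf.intervalIntegrable _ _) b).neg
  exact this.tendsto a

end

open Complex in
lemma exp_I_mul_sub_sub_exp_I_mul_add (x y : ℂ) :
    Complex.exp (I * (x - y)) - Complex.exp (I * (x + y)) =
      -2 * I * Complex.exp (I * x) * Complex.sin y := by
  rw [show I * (x - y) = x * I + -y * I by ring, show I * (x + y) = x * I + y * I by ring,
    Complex.exp_add, Complex.exp_add, ← mul_sub, mul_comm x I]
  linear_combination (I * Complex.exp (I * x)) * Complex.two_sin y +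
    Complex.exp (I * x) * (Complex.exp (-y * I) - Complex.exp (y * I)) * I_sq

lemma sin_half_ne_zero {u : ℝ} (h₀ : u ≠ 0) (h : |u| < 2 * π) : sin (u / 2) ≠ 0 := by
  rw [abs_lt] at h
  rw [Ne, sin_eq_zero_iff_of_lt_of_lt (by linarith) (by linarith)]
  exact div_ne_zero h₀ two_ne_zero

noncomputable def hilbertIntegrand (p : ℤ) (t u : ℝ) : ℂ :=
  Complex.exp (Complex.I * p * (t - u)) * ((cos (u / 2) / sin (u / 2) : ℝ) : ℂ)

lemma continuousOn_hilbertIntegrand (p : ℤ) (t : ℝ) :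
    ContinuousOn (hilbertIntegrand p t) {u | sin (u / 2) ≠ 0} := by
  have hexp : Continuous fun u : ℝ => Complex.exp (Complex.I * p * (t - u)) := by fun_prop
  refine hexp.continuousOn.mul (Complex.continuous_ofReal.comp_continuousOn ?_)
  exact (by fun_prop : Continuous fun u => cos (u / 2)).continuousOn.div
    (by fun_prop : Continuous fun u => sin (u / 2)).continuousOn fun _ hu => hu

lemma integrableOn_hilbertIntegrand (p : ℤ) (t : ℝ) {a b : ℝ} (ha : 0 < a) (hb : b < 2 * π) :
    IntegrableOn (hilbertIntegrand p t) (Icc a b) ∧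
      IntegrableOn (hilbertIntegrand p t) (Icc (-b) (-a)) := by
  have hsin : Icc a b ∪ Icc (-b) (-a) ⊆ {u | sin (u / 2) ≠ 0} := by
    rintro u (⟨h₁, h₂⟩ | ⟨h₁, h₂⟩) <;>
      exact sin_half_ne_zero (by intro; linarith) (abs_lt.mpr ⟨by linarith, by linarith⟩)
  have hcont := (continuousOn_hilbertIntegrand p t).mono hsin
  exact ⟨(hcont.mono subset_union_left).integrableOn_Icc,
    (hcont.mono subset_union_right).integrableOn_Icc⟩

lemma hilbertIntegrand_add_neg (p : ℤ) (t : ℝ) {u : ℝ} (hu : sin (u / 2) ≠ 0) :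
    hilbertIntegrand p t u + hilbertIntegrand p t (-u) =
      -2 * Complex.I * Complex.exp (Complex.I * p * t) * sinCotKernel p u := by
  have hsin : sin (p * u) * (cos (u / 2) / sin (u / 2)) = sinCotKernel p u := by
    rw [← mul_div_assoc, sin_int_mul_mul_cos_half, mul_div_assoc, div_self hu, mul_one]
  have hexp := exp_I_mul_sub_sub_exp_I_mul_add (p * t) (p * u)
  unfold hilbertIntegrand
  rw [neg_div, cos_neg, sin_neg, div_neg, ← hsin]
  push_cast
  rw [show Complex.I * p * (t - -u) = Complex.I * (p * t + p * u) by ring,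
    show Complex.I * p * (t - u) = Complex.I * (p * t - p * u) by ring, mul_assoc Complex.I]
  linear_combination (Complex.cos (u / 2) / Complex.sin (u / 2)) * hexp

/-- The periodic Hilbert transform sends the character `e_p(t) = e^{ipt}` to
`-i · sgn(p) · e_p`: for every integer `p` and real `t`, the principal value
`lim_{ε→0⁺} (1/2π) ∫_{ε ≤ |u| ≤ π} e^{ip(t-u)} cot(u/2) du` equals `-i·sgn(p)·e^{ipt}`. -/
theorem hilbert_transform_character (p : ℤ) (t : ℝ) :
    Filter.Tendsto
      (fun ε : ℝ =>
        (1 / (2 * (Real.pi : ℂ))) *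
          ∫ u in {u : ℝ | ε ≤ |u| ∧ |u| ≤ Real.pi},
            Complex.exp (Complex.I * p * (t - u)) *
              ((Real.cos (u / 2) / Real.sin (u / 2) : ℝ) : ℂ))
      (nhdsWithin (0 : ℝ) (Set.Ioi 0))
      (nhds (-Complex.I * (Int.sign p : ℂ) * Complex.exp (Complex.I * p * t))) := by
  set c := -2 * Complex.I * Complex.exp (Complex.I * p * t) with hc
  have hval : 1 / (2 * (π : ℂ)) * ∫ u in (0 : ℝ)..π, c * sinCotKernel p u =
      -Complex.I * p.sign * Complex.exp (Complex.I * p * t) := by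
    have hπ : (π : ℂ) ≠ 0 := Complex.ofReal_ne_zero.mpr pi_ne_zero
    rw [intervalIntegral.integral_const_mul, intervalIntegral.integral_ofReal,
      integral_sinCotKernel, hc]
    push_cast
    field_simp
  have hcont : Continuous fun u => c * (sinCotKernel p u : ℂ) := by fun_prop
  have hlim := ((hcont.tendsto_intervalIntegral_left 0 π).mono_left
    (nhdsWithin_le_nhds (s := Ioi 0))).const_mul (1 / (2 * (π : ℂ)))
  rw [hval] at hlim
  refine hlim.congr' ?_
  filter_upwards [Ioo_mem_nhdsGT pi_pos] with ε ⟨hε, hεπ⟩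
  obtain ⟨hint_pos, hint_neg⟩ := integrableOn_hilbertIntegrand p t hε (by linarith [pi_pos])
  change _ = _ * ∫ u in _, hilbertIntegrand p t u
  rw [setIntegral_abs_mem_Icc_eq_integral_add_neg hε hεπ.le hint_neg hint_pos]
  congr 1
  refine intervalIntegral.integral_congr fun u hu => (hilbertIntegrand_add_neg p t ?_).symm
  rw [uIcc_of_le hεπ.le] at hu
  exact sin_half_ne_zero (by linarith [hu.1])
    (abs_lt.mpr ⟨by linarith [hu.1, pi_pos], by linarith [hu.2, pi_pos]⟩)
end

section
/- Let 𝓗 be a nonzero finite-dimensional complex inner product space and A : 𝓗 → 𝓗 a self-adjoint linear operator with exp(2πi·A) = id (so every eigenvalue of A is an integer). Let E ∈ ℝ and let ⌈E⌉ denote the ceiling of E. Then the spectral projection 1_{[E,∞)}(A) equals (1/2)·( i·(1/2π) ∫₀^π ( exp(−i t A)·e^{i⌈E⌉t} − exp(i t A)·e^{−i⌈E⌉t} )·cot(t/2) dt + id + (1/2π) ∫_{−π}^{π} exp(i t A)·e^{−i⌈E⌉t} dt ). -/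
/-!
Since `exp(2πiA) = 1`, every eigenvalue `m` of `A` is an integer, and `exp(itA) = ∑ₘ e^{imt} Pₘ`.
Both integrals are therefore diagonal in the eigenprojections `Pₘ`: writing `k = ⌈E⌉ - m`, the
first has coefficient `2i ∫₀^π cot(t/2) sin(kt) dt = 2πi · sign k` and the second `2π · [k = 0]`.
So the right-hand side is `∑ₘ ½(1 - sign k + [k = 0]) Pₘ`, and `½(1 - sign k + [k = 0])` is the
indicator of `k ≤ 0`, i.e. of `E ≤ m`. The cotangent integral is computed by telescoping in `k`:
`cot(t/2) (sin((k+1)t) - sin(kt)) = cos(kt) + cos((k+1)t)`.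
-/

open MeasureTheory intervalIntegral

/-- The orthogonal projection of `H` onto the eigenspace `ker (A - μ·id)` of `A`,
viewed as an operator `H →L[ℂ] H` (the zero operator if `μ` is not an eigenvalue). -/
noncomputable def eigenProjCLM {H : Type*} [NormedAddCommGroup H]
    [InnerProductSpace ℂ H] [FiniteDimensional ℂ H]
    (A : H →L[ℂ] H) (μ : ℂ) : H →L[ℂ] H :=
  (Module.End.eigenspace (A : H →ₗ[ℂ] H) μ).subtypeL.comp
    (Submodule.orthogonalProjectionOnto (Module.End.eigenspace (A : H →ₗ[ℂ] H) μ))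

/-- The spectral projection `1_{[E,∞)}(A) = ∑_{m ∈ spec(A), m ≥ E} P_m` of an operator
all of whose eigenvalues are integers; the sum over integers `m ≥ E` of the orthogonal
projections onto `ker (A - m·id)` (only finitely many terms are nonzero). -/
noncomputable def spectralProjCLM {H : Type*} [NormedAddCommGroup H]
    [InnerProductSpace ℂ H] [FiniteDimensional ℂ H]
    (A : H →L[ℂ] H) (E : ℝ) : H →L[ℂ] H :=
  ∑' m : ℤ, if E ≤ (m : ℝ) then eigenProjCLM A (m : ℂ) else 0

section Trigonometric

open Real

lemma cot_mul_sin_add_one {t : ℝ} (ht : sin (t / 2) ≠ 0) (x : ℝ) :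
    cot (t / 2) * sin ((x + 1) * t) =
      cot (t / 2) * sin (x * t) + (cos (x * t) + cos ((x + 1) * t)) := by
  have h₁ : (x + 1) * t = (x + 1 / 2) * t + t / 2 := by ring
  have h₂ : x * t = (x + 1 / 2) * t - t / 2 := by ring
  rw [cot_eq_cos_div_sin, h₁, h₂, sin_add, sin_sub, cos_add, cos_sub]
  field_simp
  ring

lemma sin_half_ne_zero_of_mem_Ioc {t : ℝ} (ht : t ∈ Set.Ioc 0 π) : sin (t / 2) ≠ 0 :=
  (sin_pos_of_pos_of_lt_pi (by linarith [ht.1]) (by linarith [ht.2, pi_pos])).ne'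

lemma integral_cos_natCast_mul (n : ℕ) :
    ∫ t in (0 : ℝ)..π, cos (n * t) = if n = 0 then π else 0 := by
  split_ifs with hn
  · simp [hn]
  · have hn' : (n : ℝ) ≠ 0 := Nat.cast_ne_zero.mpr hn
    simp [integral_comp_mul_left (fun t => cos t) hn', sin_nat_mul_pi]

lemma intervalIntegrable_cot_mul_sin_natCast_mul (n : ℕ) :
    IntervalIntegrable (fun t => cot (t / 2) * sin (n * t)) volume 0 π := by
  induction n with
  | zero => simp
  | succ n ih =>
    have hcos : Continuous fun t : ℝ => cos (n * t) + cos ((n + 1) * t) := by fun_prop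
    refine IntervalIntegrable.congr (fun t ht => ?_) (ih.add (hcos.intervalIntegrable _ _))
    rw [Set.uIoc_of_le pi_pos.le] at ht
    simp only [Nat.cast_succ, cot_mul_sin_add_one (sin_half_ne_zero_of_mem_Ioc ht)]

lemma integral_cot_mul_sin_natCast_mul (n : ℕ) :
    ∫ t in (0 : ℝ)..π, cot (t / 2) * sin (n * t) = if n = 0 then 0 else π := by
  induction n with
  | zero => simp
  | succ n ih =>
    have hcongr : ∫ t in (0 : ℝ)..π, cot (t / 2) * sin ((n + 1 : ℕ) * t) =
        ∫ t in (0 : ℝ)..π, cot (t / 2) * sin (n * t) + (cos (n * t) + cos ((n + 1 : ℕ) * t)) := by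
      refine integral_congr_ae (Filter.Eventually.of_forall fun t ht => ?_)
      rw [Set.uIoc_of_le pi_pos.le] at ht
      push_cast
      exact cot_mul_sin_add_one (sin_half_ne_zero_of_mem_Ioc ht) n
    have hcos : ∀ m : ℕ, IntervalIntegrable (fun t => cos (m * t)) volume 0 π := fun m =>
      (by fun_prop : Continuous fun t : ℝ => cos (m * t)).intervalIntegrable _ _
    rw [hcongr, integral_add (intervalIntegrable_cot_mul_sin_natCast_mul n)
      ((hcos n).add (hcos (n + 1))), integral_add (hcos n) (hcos (n + 1)), ih,
      integral_cos_natCast_mul, integral_cos_natCast_mul]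
    rcases n with _ | n <;> simp

lemma intervalIntegrable_cot_mul_sin_intCast_mul (k : ℤ) :
    IntervalIntegrable (fun t => cot (t / 2) * sin (k * t)) volume 0 π := by
  obtain ⟨n, rfl | rfl⟩ := k.eq_nat_or_neg
  · exact_mod_cast intervalIntegrable_cot_mul_sin_natCast_mul n
  · refine .congr (fun t _ => ?_) (intervalIntegrable_cot_mul_sin_natCast_mul n).neg
    simp [sin_neg]

lemma integral_cot_mul_sin_intCast_mul (k : ℤ) :
    ∫ t in (0 : ℝ)..π, cot (t / 2) * sin (k * t) = π * k.sign := by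
  obtain ⟨n, rfl | rfl⟩ := k.eq_nat_or_neg
  · rcases n with _ | n
    · simp
    · simpa [Int.sign_natCast_of_ne_zero] using integral_cot_mul_sin_natCast_mul (n + 1)
  · have hodd (t : ℝ) : cot (t / 2) * sin (((-n : ℤ) : ℝ) * t) = -(cot (t / 2) * sin (n * t)) := by
      push_cast
      rw [neg_mul, sin_neg, mul_neg]
    simp_rw [hodd, intervalIntegral.integral_neg, integral_cot_mul_sin_natCast_mul]
    rcases n with _ | n
    · simp
    · rw [Int.sign_neg, Int.sign_natCast_of_ne_zero n.succ_ne_zero]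
      simp

lemma integral_exp_intCast_mul_I (k : ℤ) :
    ∫ t in -π..π, Complex.exp (k * t * Complex.I) = if k = 0 then 2 * (π : ℂ) else 0 := by
  split_ifs with hk
  · simp [hk, two_mul]
  · have hc : (k : ℂ) * Complex.I ≠ 0 := by simp [hk, Complex.I_ne_zero]
    have hperiod : Complex.exp (k * Complex.I * π) = Complex.exp (k * Complex.I * (-π : ℝ)) :=
      Complex.exp_eq_exp_iff_exists_int.mpr ⟨k, by push_cast; ring⟩
    simp_rw [mul_right_comm _ _ Complex.I]
    rw [integral_exp_mul_complex hc, hperiod, sub_self, zero_div]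

lemma Complex.exp_mul_I_sub_exp_neg_mul_I (x : ℂ) :
    Complex.exp (x * Complex.I) - Complex.exp (-x * Complex.I) = 2 * Complex.I * Complex.sin x := by
  linear_combination (-Complex.I) * Complex.two_sin x +
    (Complex.exp (x * Complex.I) - Complex.exp (-x * Complex.I)) * Complex.I_sq

end Trigonometric

lemma NormedSpace.exp_apply_of_apply_eq_smul {E : Type*} [NormedAddCommGroup E] [NormedSpace ℂ E]
    [CompleteSpace E] {T : E →L[ℂ] E} {v : E} {μ : ℂ} (hv : T v = μ • v) :
    NormedSpace.exp T v = Complex.exp μ • v := by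
  have hpow (n : ℕ) : (T ^ n) v = μ ^ n • v := by
    induction n with
    | zero => simp
    | succ n ih => rw [pow_succ, mul_apply_eq_comp, hv, map_smul, ih, smul_smul, pow_succ']
  have hT := (NormedSpace.exp_series_hasSum_exp' (𝕂 := ℂ) T).mapL (ContinuousLinearMap.apply ℂ E v)
  have hμ := (NormedSpace.exp_series_hasSum_exp' (𝕂 := ℂ) μ).smul_const v
  rw [Complex.exp_eq_exp_ℂ]
  refine hT.unique (hμ.congr_fun fun n => ?_)
  simp [hpow, smul_smul]

lemma exists_intCast_of_exp_two_pi_I_smul_eq_one {E : Type*} [NormedAddCommGroup E]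
    [NormedSpace ℂ E] [CompleteSpace E] {T : E →L[ℂ] E}
    (hT : NormedSpace.exp (((2 * Real.pi : ℝ) * Complex.I) • T) = 1)
    {v : E} (hv0 : v ≠ 0) {μ : ℂ} (hv : T v = μ • v) : ∃ m : ℤ, μ = m := by
  have hexp := NormedSpace.exp_apply_of_apply_eq_smul (T := ((2 * Real.pi : ℝ) * Complex.I) • T)
    (μ := (2 * Real.pi : ℝ) * Complex.I * μ) (by rw [smul_apply, hv, smul_smul])
  rw [hT, one_apply_eq_self, eq_comm, ← one_smul ℂ v, smul_smul, mul_one] at hexp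
  obtain ⟨m, hm⟩ := Complex.exp_eq_one_iff.mp (smul_left_injective ℂ hv0 hexp)
  refine ⟨m, mul_left_cancel₀ (by simp [Real.pi_ne_zero] : (2 * Real.pi : ℂ) * Complex.I ≠ 0) ?_⟩
  push_cast at hm
  linear_combination hm

section Spectral

variable {H : Type*} [NormedAddCommGroup H] [InnerProductSpace ℂ H] [FiniteDimensional ℂ H]
  {A : H →L[ℂ] H}

lemma eigenProjCLM_eq_starProjection (A : H →L[ℂ] H) (μ : ℂ) :
    eigenProjCLM A μ = (Module.End.eigenspace (A : H →ₗ[ℂ] H) μ).starProjection :=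
  rfl

lemma eigenProjCLM_apply_of_apply_eq_smul {μ : ℂ} {v : H} (hv : A v = μ • v) :
    eigenProjCLM A μ v = v := by
  rw [eigenProjCLM_eq_starProjection, Submodule.starProjection_eq_self_iff]
  exact Module.End.mem_eigenspace_iff.mpr hv

lemma eigenProjCLM_apply_of_ne (hA : IsSelfAdjoint A) {μ ν : ℂ} (hne : ν ≠ μ) {v : H}
    (hv : A v = ν • v) : eigenProjCLM A μ v = 0 := by
  rw [eigenProjCLM_eq_starProjection, Submodule.starProjection_apply_eq_zero_iff]
  intro u hu
  simpa using hA.isSymmetric.orthogonalFamily_eigenspaces hne.symm ⟨u, hu⟩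
    ⟨v, Module.End.mem_eigenspace_iff.mpr hv⟩

lemma eigenProjCLM_eq_zero {μ : ℂ} (hμ : ¬ Module.End.HasEigenvalue (A : H →ₗ[ℂ] H) μ) :
    eigenProjCLM A μ = 0 := by
  rw [Module.End.hasEigenvalue_iff, not_not] at hμ
  ext v
  simp [eigenProjCLM_eq_starProjection, hμ]

variable (A) in
noncomputable def intEigenvalues : Finset ℤ :=
  ((Module.End.finite_hasEigenvalue (A : H →ₗ[ℂ] H)).preimage Int.cast_injective.injOn).toFinset

lemma mem_intEigenvalues {m : ℤ} :
    m ∈ intEigenvalues A ↔ Module.End.HasEigenvalue (A : H →ₗ[ℂ] H) m := by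
  simp [intEigenvalues]

lemma ext_of_apply_intEigenvector (hA : IsSelfAdjoint A)
    (hper : NormedSpace.exp (((2 * Real.pi : ℝ) * Complex.I) • A) = 1) {T S : H →L[ℂ] H}
    (h : ∀ (m : ℤ) (v : H), A v = (m : ℂ) • v → T v = S v) : T = S := by
  ext v
  have hv : v ∈ ⨆ μ, Module.End.eigenspace (A : H →ₗ[ℂ] H) μ := by
    rw [Submodule.orthogonal_eq_bot_iff.mp
      hA.isSymmetric.orthogonalComplement_iSup_eigenspaces_eq_bot]
    trivial
  refine Submodule.iSup_induction _ (motive := fun x => T x = S x) hv (fun μ x hx => ?_) (by simp)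
    (fun x y hx hy => by rw [map_add, map_add, hx, hy])
  obtain rfl | hx0 := eq_or_ne x 0
  · simp
  have hAx : A x = μ • x := Module.End.mem_eigenspace_iff.mp hx
  obtain ⟨m, rfl⟩ := exists_intCast_of_exp_two_pi_I_smul_eq_one hper hx0 hAx
  exact h m x hAx

lemma sum_smul_eigenProjCLM_apply (hA : IsSelfAdjoint A) (f : ℤ → ℂ) {m : ℤ} {v : H}
    (hv : A v = (m : ℂ) • v) :
    (∑ n ∈ intEigenvalues A, f n • eigenProjCLM A n) v = f m • v := by
  obtain rfl | hv0 := eq_or_ne v 0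
  · simp
  have hm : m ∈ intEigenvalues A := mem_intEigenvalues.mpr <|
    Module.End.hasEigenvalue_of_hasEigenvector ⟨Module.End.mem_eigenspace_iff.mpr hv, hv0⟩
  rw [sum_apply, Finset.sum_eq_single_of_mem m hm fun n _ hnm => ?_]
  · rw [smul_apply, eigenProjCLM_apply_of_apply_eq_smul hv]
  · rw [smul_apply, eigenProjCLM_apply_of_ne hA (by exact_mod_cast hnm.symm) hv, smul_zero]

lemma exp_smul_eq_sum_eigenProjCLM (hA : IsSelfAdjoint A)
    (hper : NormedSpace.exp (((2 * Real.pi : ℝ) * Complex.I) • A) = 1) (c : ℂ) :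
    NormedSpace.exp (c • A) = ∑ m ∈ intEigenvalues A, Complex.exp (c * m) • eigenProjCLM A m := by
  refine ext_of_apply_intEigenvector hA hper fun m v hv => ?_
  rw [sum_smul_eigenProjCLM_apply hA _ hv,
    NormedSpace.exp_apply_of_apply_eq_smul (by rw [smul_apply, hv, smul_smul])]

lemma sum_eigenProjCLM_eq_one (hA : IsSelfAdjoint A)
    (hper : NormedSpace.exp (((2 * Real.pi : ℝ) * Complex.I) • A) = 1) :
    ∑ m ∈ intEigenvalues A, eigenProjCLM A m = 1 := by
  simpa using (exp_smul_eq_sum_eigenProjCLM hA hper 0).symm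

lemma spectralProjCLM_eq_sum (E : ℝ) :
    spectralProjCLM A E = ∑ m ∈ intEigenvalues A, if E ≤ (m : ℝ) then eigenProjCLM A m else 0 :=
  tsum_eq_sum fun m hm => by simp [eigenProjCLM_eq_zero (mem_intEigenvalues.not.mp hm)]

lemma cot_smul_exp_sub_exp_eq_sum (hA : IsSelfAdjoint A)
    (hper : NormedSpace.exp (((2 * Real.pi : ℝ) * Complex.I) • A) = 1) (N : ℤ) (t : ℝ) :
    (Real.cos (t / 2) / Real.sin (t / 2)) •
        (Complex.exp (Complex.I * N * t) • NormedSpace.exp ((-(t : ℂ) * Complex.I) • A) -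
          Complex.exp (-Complex.I * N * t) • NormedSpace.exp (((t : ℂ) * Complex.I) • A)) =
      ∑ m ∈ intEigenvalues A,
        (Real.cot (t / 2) * Real.sin ((N - m : ℤ) * t)) • ((2 * Complex.I) • eigenProjCLM A m) := by
  rw [exp_smul_eq_sum_eigenProjCLM hA hper, exp_smul_eq_sum_eigenProjCLM hA hper,
    Finset.smul_sum, Finset.smul_sum, ← Finset.sum_sub_distrib, Finset.smul_sum,
    ← Real.cot_eq_cos_div_sin]
  refine Finset.sum_congr rfl fun m _ => ?_
  rw [smul_smul, smul_smul, ← sub_smul, ← Complex.exp_add, ← Complex.exp_add, ← Complex.coe_smul,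
    smul_smul, ← Complex.coe_smul, smul_smul]
  have h₁ : Complex.I * N * t + -t * Complex.I * m = ((N - m : ℤ) * t : ℝ) * Complex.I := by
    push_cast; ring
  have h₂ : -Complex.I * N * t + t * Complex.I * m = -((N - m : ℤ) * t : ℝ) * Complex.I := by
    push_cast; ring
  rw [h₁, h₂, Complex.exp_mul_I_sub_exp_neg_mul_I, ← Complex.ofReal_sin, Complex.ofReal_mul]
  congr 1
  ring

lemma exp_smul_exp_eq_sum (hA : IsSelfAdjoint A)
    (hper : NormedSpace.exp (((2 * Real.pi : ℝ) * Complex.I) • A) = 1) (N : ℤ) (t : ℝ) :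
    Complex.exp (-Complex.I * N * t) • NormedSpace.exp (((t : ℂ) * Complex.I) • A) =
      ∑ m ∈ intEigenvalues A, Complex.exp ((m - N : ℤ) * t * Complex.I) • eigenProjCLM A m := by
  rw [exp_smul_eq_sum_eigenProjCLM hA hper, Finset.smul_sum]
  refine Finset.sum_congr rfl fun m _ => ?_
  rw [smul_smul, ← Complex.exp_add]
  congr 2
  push_cast
  ring

lemma integral_cot_smul_exp_sub_exp (hA : IsSelfAdjoint A)
    (hper : NormedSpace.exp (((2 * Real.pi : ℝ) * Complex.I) • A) = 1) (N : ℤ) :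
    ∫ t in (0 : ℝ)..Real.pi, (Real.cos (t / 2) / Real.sin (t / 2)) •
        (Complex.exp (Complex.I * N * t) • NormedSpace.exp ((-(t : ℂ) * Complex.I) • A) -
          Complex.exp (-Complex.I * N * t) • NormedSpace.exp (((t : ℂ) * Complex.I) • A)) =
      ∑ m ∈ intEigenvalues A,
        (Real.pi * (N - m).sign) • ((2 * Complex.I) • eigenProjCLM A m) := by
  simp_rw [cot_smul_exp_sub_exp_eq_sum hA hper]
  rw [intervalIntegral.integral_finsetSum fun m _ =>
    (intervalIntegrable_cot_mul_sin_intCast_mul (N - m)).smul_continuousOn continuousOn_const]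
  simp_rw [intervalIntegral.integral_smul_const, integral_cot_mul_sin_intCast_mul]

lemma integral_exp_smul_exp (hA : IsSelfAdjoint A)
    (hper : NormedSpace.exp (((2 * Real.pi : ℝ) * Complex.I) • A) = 1) (N : ℤ) :
    ∫ t in -Real.pi..Real.pi,
        Complex.exp (-Complex.I * N * t) • NormedSpace.exp (((t : ℂ) * Complex.I) • A) =
      ∑ m ∈ intEigenvalues A, (if m - N = 0 then 2 * (Real.pi : ℂ) else 0) • eigenProjCLM A m := by
  simp_rw [exp_smul_exp_eq_sum hA hper]
  rw [intervalIntegral.integral_finsetSum fun m _ =>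
    Continuous.intervalIntegrable (by fun_prop) _ _]
  simp_rw [intervalIntegral.integral_smul_const, integral_exp_intCast_mul_I]

end Spectral

theorem spectral_projection_eq_hilbert_transform_formula_general
    {H : Type*} [NormedAddCommGroup H] [InnerProductSpace ℂ H]
    [FiniteDimensional ℂ H]
    (A : H →L[ℂ] H) (hA : IsSelfAdjoint A)
    (hper : NormedSpace.exp (((2 * Real.pi : ℝ) * Complex.I) • A) = 1)
    (E : ℝ) :
    spectralProjCLM A E =
      ((1 : ℂ) / 2) •
        (Complex.I •
          ((1 / (2 * Real.pi)) •
            ∫ t in (0 : ℝ)..Real.pi,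
              (Real.cos (t / 2) / Real.sin (t / 2)) •
                (Complex.exp (Complex.I * (⌈E⌉ : ℂ) * t) •
                    NormedSpace.exp ((-(t : ℂ) * Complex.I) • A) -
                  Complex.exp (-Complex.I * (⌈E⌉ : ℂ) * t) •
                    NormedSpace.exp (((t : ℂ) * Complex.I) • A)))
          + 1
          + (1 / (2 * Real.pi)) •
            ∫ t in (-Real.pi : ℝ)..Real.pi,
              Complex.exp (-Complex.I * (⌈E⌉ : ℂ) * t) •
                NormedSpace.exp (((t : ℂ) * Complex.I) • A)) := by
  rw [spectralProjCLM_eq_sum, integral_cot_smul_exp_sub_exp hA hper,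
    integral_exp_smul_exp hA hper, ← sum_eigenProjCLM_eq_one hA hper]
  simp only [Finset.smul_sum, ← Finset.sum_add_distrib]
  refine Finset.sum_congr rfl fun m _ => ?_
  simp only [← Int.ceil_le]
  rw [← one_smul ℂ (eigenProjCLM A m), ← ite_zero_smul]
  match_scalars
  simp only [Algebra.cast, Complex.coe_algebraMap]
  have hπ : (Real.pi : ℂ) ≠ 0 := Complex.ofReal_ne_zero.mpr Real.pi_ne_zero
  rcases lt_trichotomy m ⌈E⌉ with h | rfl | h
  · rw [if_neg h.not_ge, if_neg (sub_ne_zero.mpr h.ne), Int.sign_eq_one_of_pos (sub_pos.mpr h)]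
    field_simp
    linear_combination (-2 * (Real.pi : ℂ)) * Complex.I_sq
  · rw [if_pos le_rfl, sub_self, if_pos rfl, Int.sign_zero]
    field_simp
    ring
  · rw [if_pos h.le, if_neg (sub_ne_zero.mpr h.ne'), Int.sign_eq_neg_one_of_neg (sub_neg.mpr h)]
    field_simp
    linear_combination (2 * (Real.pi : ℂ)) * Complex.I_sq

/-- For a self-adjoint operator `A` with `exp(2πi·A) = id` on a nonzero
finite-dimensional complex inner product space and `E ∈ ℝ`, the spectral projection
`1_{[E,∞)}(A)` equals
`(1/2)·( i·(1/2π)∫₀^π (e^{i⌈E⌉t}·exp(-itA) - e^{-i⌈E⌉t}·exp(itA))·cot(t/2) dt + id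
  + (1/2π)∫_{-π}^{π} e^{-i⌈E⌉t}·exp(itA) dt )`. -/
theorem spectral_projection_eq_hilbert_transform_formula
    {H : Type*} [NormedAddCommGroup H] [InnerProductSpace ℂ H]
    [FiniteDimensional ℂ H] [Nontrivial H]
    (A : H →L[ℂ] H) (hA : IsSelfAdjoint A)
    (hper : NormedSpace.exp (((2 * Real.pi : ℝ) * Complex.I) • A) = 1)
    (E : ℝ) :
    spectralProjCLM A E =
      ((1 : ℂ) / 2) •
        (Complex.I •
          ((1 / (2 * Real.pi)) •
            ∫ t in (0 : ℝ)..Real.pi,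
              (Real.cos (t / 2) / Real.sin (t / 2)) •
                (Complex.exp (Complex.I * (⌈E⌉ : ℂ) * t) •
                    NormedSpace.exp ((-(t : ℂ) * Complex.I) • A) -
                  Complex.exp (-Complex.I * (⌈E⌉ : ℂ) * t) •
                    NormedSpace.exp (((t : ℂ) * Complex.I) • A)))
          + 1
          + (1 / (2 * Real.pi)) •
            ∫ t in (-Real.pi : ℝ)..Real.pi,
              Complex.exp (-Complex.I * (⌈E⌉ : ℂ) * t) •
                NormedSpace.exp (((t : ℂ) * Complex.I) • A)) :=
  spectral_projection_eq_hilbert_transform_formula_general A hA hper E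
end

section
/- Let E ∈ (0,1) and let l : ℕ → ℕ be a sequence with l(k) ≤ k for all k and such that there exists C > 0 with |l(k) − k·E| ≤ C for all k. Then √( (k+1)/(2π) · C(k, l(k)) · E^{l(k)} · (1−E)^{k−l(k)} ) = k^{1/4} / ( (2π)^{3/4} · (E(1−E))^{1/4} ) + O(k^{−3/4}); that is, there exist C' > 0 and k₀ such that for all k ≥ k₀ the absolute value of the difference is at most C'·k^{−3/4}. -/
/-!
Write `a = l(k)`, `b = k - a`, `p = E` and `T_k` for the claimed leading term. Since
`(k+1)/(2π) = (1 + 1/k) · √(2πkp(1-p)) · T_k²`, the claim is a quantitative local central limit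
theorem at the centre of the binomial distribution:
`log (C(k,a) pᵃ (1-p)ᵇ √(2πkp(1-p))) = O(1/k)`. Stirling's formula `n! = sₙ √(2n) (n/e)ⁿ`
splits this logarithm into the Stirling corrections `log sₙ - log √π ∈ [0, 1/(12n)]`
(Robbins), the relative entropy `a log (a/kp) + b log (b/k(1-p))`, squeezed between `0` and the
`χ²`-divergence `(a-kp)²/(kp(1-p))`, and `½ log (a/kp) + ½ log (b/k(1-p))`; all three are
`O(1/k)` because `a - kp` is bounded. Exponentiating an `O(1/k)` error in the logarithm costs
only a relative error `O(1/k)`, i.e. an absolute error `O(k^{1/4}/k)`.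
-/

open Real Filter Topology Stirling
open scoped Nat

namespace Stirling

/-- Robbins' bound `log sₙ - log sₙ₊₁ ≤ 1/(12n) - 1/(12(n+1))` makes `log sₙ - 1/(12n)`
increasing, and its limit is `log √π`. -/
theorem log_stirlingSeq_le {n : ℕ} (hn : n ≠ 0) :
    log (stirlingSeq n) ≤ log √π + 1 / (12 * n) := by
  let g : ℕ → ℝ := fun m ↦ log (stirlingSeq (m + 1)) - 12⁻¹ / (m + 1 : ℕ)
  have hg : Monotone g := by
    refine monotone_nat_of_le_succ fun m ↦ ?_
    have := log_stirlingSeq_sdiff_le (m + 1)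
    have h : (1 : ℝ) / (12 * (m + 1 : ℕ) * ((m + 1 : ℕ) + 1)) =
        12⁻¹ / (m + 1 : ℕ) - 12⁻¹ / (m + 1 + 1 : ℕ) := by
      push_cast; field_simp; ring
    simp only [g]
    linarith
  have hlim : Tendsto g atTop (𝓝 (log √π - 0)) :=
    ((continuousAt_log (by positivity)).tendsto.comp tendsto_stirlingSeq_sqrt_pi).comp
      (tendsto_add_atTop_nat 1) |>.sub
      ((tendsto_const_div_atTop_nhds_zero_nat _).comp (tendsto_add_atTop_nat 1))
  obtain ⟨m, rfl⟩ := Nat.exists_eq_add_one_of_ne_zero hn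
  have := hg.ge_of_tendsto hlim m
  simp only [g, sub_zero] at this
  linarith [show (1 : ℝ) / (12 * (m + 1 : ℕ)) = 12⁻¹ / (m + 1 : ℕ) by ring]

theorem abs_log_stirlingSeq_sub_log_sqrt_pi_le {n : ℕ} (hn : n ≠ 0) :
    |log (stirlingSeq n) - log √π| ≤ 1 / (12 * n) := by
  have := log_le_log (by positivity) (sqrt_pi_le_stirlingSeq hn)
  rw [abs_of_nonneg (by linarith)]
  linarith [log_stirlingSeq_le hn]

theorem log_factorial_eq {n : ℕ} (hn : n ≠ 0) :
    log n ! = log (stirlingSeq n) + log (2 * n) / 2 + n * log n - n := by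
  have hs : 0 < stirlingSeq n := by
    obtain ⟨m, rfl⟩ := Nat.exists_eq_add_one_of_ne_zero hn
    exact stirlingSeq'_pos m
  have : (n ! : ℝ) = stirlingSeq n * (√(2 * n) * (n / exp 1) ^ n) := by
    rw [stirlingSeq]; field_simp
  rw [this, log_mul hs.ne' (by positivity), log_mul (by positivity) (by positivity),
    log_sqrt (by positivity), log_pow, log_div (by positivity) (exp_pos 1).ne', log_exp]
  ring

end Stirling

namespace Real

variable {a b x y : ℝ}

theorem sub_le_mul_log_div (ha : 0 < a) (hx : 0 < x) : a - x ≤ a * log (a / x) := by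
  have := one_sub_inv_le_log_of_pos (div_pos ha hx)
  rw [inv_div] at this
  calc a - x = a * (1 - x / a) := by field_simp
    _ ≤ a * log (a / x) := by gcongr

theorem mul_log_div_le (ha : 0 < a) (hx : 0 < x) :
    a * log (a / x) ≤ a - x + (a - x) ^ 2 / x := by
  calc a * log (a / x) ≤ a * (a / x - 1) := by
        gcongr; exact log_le_sub_one_of_pos (div_pos ha hx)
    _ = a - x + (a - x) ^ 2 / x := by field_simp; ring

theorem abs_log_div_le (ha : 0 < a) (hx : 0 < x) : |log (a / x)| ≤ |a - x| / min a x := by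
  have hm : 0 < min a x := lt_min ha hx
  have lower : (a - x) / a ≤ log (a / x) := by
    have := one_sub_inv_le_log_of_pos (div_pos ha hx)
    rwa [inv_div, one_sub_div ha.ne'] at this
  have upper : log (a / x) ≤ (a - x) / x := by
    have := log_le_sub_one_of_pos (div_pos ha hx)
    rwa [div_sub_one hx.ne'] at this
  rw [abs_le]
  constructor
  · calc -(|a - x| / min a x) ≤ -(|a - x| / a) := by
          gcongr; exact min_le_left a x
      _ ≤ (a - x) / a := by rw [← neg_div]; gcongr; exact neg_abs_le _
      _ ≤ log (a / x) := lower
  · calc log (a / x) ≤ (a - x) / x := upper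
      _ ≤ |a - x| / x := by gcongr; exact le_abs_self _
      _ ≤ |a - x| / min a x := by gcongr; exact min_le_right a x

theorem abs_mul_log_div_add_mul_log_div_le (ha : 0 < a) (hb : 0 < b) (hx : 0 < x)
    (hy : 0 < y) (h : a + b = x + y) :
    |a * log (a / x) + b * log (b / y)| ≤ (a - x) ^ 2 / x + (b - y) ^ 2 / y := by
  rw [abs_of_nonneg (by linarith [sub_le_mul_log_div ha hx, sub_le_mul_log_div hb hy])]
  linarith [mul_log_div_le ha hx, mul_log_div_le hb hy]

theorem abs_sub_le_of_abs_log_sub_log_le {s t δ : ℝ} (hs : 0 < s) (ht : 0 < t)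
    (h : |log s - log t| ≤ δ) (hδ : δ ≤ 1) : |s - t| ≤ 2 * δ * t := by
  have hst : s - t = t * (exp (log s - log t) - 1) := by
    rw [exp_sub, exp_log hs, exp_log ht]; field_simp
  rw [hst, abs_mul, abs_of_pos ht, mul_comm t]
  gcongr
  exact (abs_exp_sub_one_le (h.trans hδ)).trans (by gcongr)

end Real

theorem log_choose_mul_pow_mul_pow_mul_sqrt {a b : ℕ} (ha : a ≠ 0) (hb : b ≠ 0) {p q : ℝ}
    (hp : 0 < p) (hq : 0 < q) :
    log ((a + b).choose a * p ^ a * q ^ b * √(2 * π * (a + b : ℕ) * p * q)) =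
      log (stirlingSeq (a + b)) - log (stirlingSeq a) - log (stirlingSeq b) + log √π
        - (a + 1 / 2) * log (a / ((a + b : ℕ) * p))
        - (b + 1 / 2) * log (b / ((a + b : ℕ) * q)) := by
  set k := a + b with hk
  have hk0 : k ≠ 0 := by omega
  have hcast : (k : ℝ) = a + b := by rw [hk]; push_cast; ring
  have hchoose : (k.choose a : ℝ) = k ! / (a ! * b !) := by
    rw [Nat.cast_choose ℝ (Nat.le_add_right a b), show k - a = b by omega]
  have ha' : (0 : ℝ) < a := by positivity
  have hb' : (0 : ℝ) < b := by positivity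
  have hk' : (0 : ℝ) < k := by positivity
  rw [hchoose, log_mul (by positivity) (by positivity), log_mul (by positivity) (by positivity),
    log_mul (by positivity) (by positivity), log_div (by positivity) (by positivity),
    log_mul (by positivity) (by positivity), log_pow, log_pow, log_sqrt (by positivity),
    log_sqrt pi_pos.le, log_mul (by positivity) hq.ne', log_mul (by positivity) hp.ne',
    log_mul (by positivity) hk'.ne', log_mul two_ne_zero pi_pos.ne',
    log_div ha'.ne' (by positivity), log_div hb'.ne' (by positivity),
    log_mul hk'.ne' hp.ne', log_mul hk'.ne' hq.ne',
    log_factorial_eq hk0, log_factorial_eq ha, log_factorial_eq hb,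
    log_mul two_ne_zero hk'.ne', log_mul two_ne_zero ha'.ne', log_mul two_ne_zero hb'.ne', hcast]
  ring

theorem abs_log_choose_mul_pow_mul_pow_mul_sqrt_le {k a : ℕ} (hak : a ≤ k) {p C : ℝ}
    (hp0 : 0 < p) (hp1 : p < 1) (hdev : |a - k * p| ≤ C) (hCp : 2 * C < k * p)
    (hCq : 2 * C < k * (1 - p)) :
    |log (k.choose a * p ^ a * (1 - p) ^ (k - a) * √(2 * π * k * p * (1 - p)))| ≤
      (1 / 12 + (1 / 6 + C + C ^ 2) / (p * (1 - p))) / k := by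
  obtain ⟨b, rfl⟩ := Nat.exists_eq_add_of_le hak
  have hq0 : 0 < 1 - p := sub_pos.2 hp1
  set x : ℝ := (a + b : ℕ) * p with hx
  set y : ℝ := (a + b : ℕ) * (1 - p) with hy
  have hsum : (a : ℝ) + b = x + y := by rw [hx, hy]; push_cast; ring
  have hdev' : |(b : ℝ) - y| ≤ C := by
    rwa [show (b : ℝ) - y = -(a - x) by linarith, abs_neg]
  have hC : 0 ≤ C := (abs_nonneg _).trans hdev
  have hxa : x ≤ 2 * a := by linarith [(abs_le.1 hdev).1]
  have hyb : y ≤ 2 * b := by linarith [(abs_le.1 hdev').1]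
  have ha : a ≠ 0 := by rintro rfl; simp at hxa; linarith
  have hb : b ≠ 0 := by rintro rfl; simp at hyb; linarith
  have stirling {n : ℕ} {z : ℝ} (hn : n ≠ 0) (hz : 0 < z) (h : z ≤ 2 * n) :
      |log (stirlingSeq n) - log √π| ≤ 1 / (6 * z) :=
    (abs_log_stirlingSeq_sub_log_sqrt_pi_le hn).trans
      (one_div_le_one_div_of_le (by positivity) (by linarith))
  have log_dev {n : ℕ} {z : ℝ} (hn : 0 < (n : ℝ)) (hz : 0 < z) (h : |n - z| ≤ C)
      (h2 : z ≤ 2 * n) : |log (n / z)| ≤ 2 * C / z :=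
    calc |log (n / z)| ≤ |n - z| / min (n : ℝ) z := abs_log_div_le hn hz
      _ ≤ C / (z / 2) := by gcongr; exact le_min (by linarith) (by linarith)
      _ = 2 * C / z := by field_simp
  have hx0 : 0 < x := by positivity
  have hy0 : 0 < y := by positivity
  have sq_dev {n : ℕ} {z : ℝ} (hz : 0 < z) (h : |n - z| ≤ C) : (n - z) ^ 2 / z ≤ C ^ 2 / z :=
    div_le_div_of_nonneg_right (sq_le_sq' (abs_le.1 h).1 (abs_le.1 h).2) hz.le
  have ha' : (0 : ℝ) < a := by positivity
  have hb' : (0 : ℝ) < b := by positivity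
  have hσk := abs_le.1 (abs_log_stirlingSeq_sub_log_sqrt_pi_le (n := a + b) (by omega))
  have hσa := abs_le.1 (stirling ha hx0 hxa)
  have hσb := abs_le.1 (stirling hb hy0 hyb)
  have hla := abs_le.1 (log_dev ha' hx0 hdev hxa)
  have hlb := abs_le.1 (log_dev hb' hy0 hdev' hyb)
  have hD := abs_le.1 ((abs_mul_log_div_add_mul_log_div_le ha' hb' hx0 hy0 hsum).trans
    (add_le_add (sq_dev hx0 hdev) (sq_dev hy0 hdev')))
  rw [Nat.add_sub_cancel_left, log_choose_mul_pow_mul_pow_mul_sqrt ha hb hp0 hq0]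
  calc _ ≤ 1 / (12 * (a + b : ℕ)) + (1 / (6 * x) + 1 / (6 * y)) + (C ^ 2 / x + C ^ 2 / y)
        + (2 * C / x + 2 * C / y) / 2 := by
        rw [abs_le]; constructor <;> linarith
    _ = _ := by rw [hx, hy]; field_simp; ring
theorem log_sqrt_div_mul_sub_log_rpow {k B p q : ℝ} (hk : 0 < k) (hB : 0 < B) (hp : 0 < p)
    (hq : 0 < q) :
    log √((k + 1) / (2 * π) * B) - log (k ^ ((1 : ℝ) / 4) /
        ((2 * π) ^ ((3 : ℝ) / 4) * (p * q) ^ ((1 : ℝ) / 4))) =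
      (log (1 + 1 / k) + log (B * √(2 * π * k * p * q))) / 2 := by
  have h2π : 0 < 2 * π := by positivity
  have hS : log ((k + 1) / (2 * π) * B) = log (k + 1) - log (2 * π) + log B := by
    rw [log_mul (by positivity) hB.ne', log_div (by positivity) h2π.ne']
  have hT : log (k ^ ((1 : ℝ) / 4) / ((2 * π) ^ ((3 : ℝ) / 4) * (p * q) ^ ((1 : ℝ) / 4))) =
      log k / 4 - 3 / 4 * log (2 * π) - (log p + log q) / 4 := by
    rw [log_div (by positivity) (by positivity), log_mul (by positivity) (by positivity),
      log_rpow hk, log_rpow h2π, log_rpow (by positivity), log_mul hp.ne' hq.ne']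
    ring
  have hR : log (B * √(2 * π * k * p * q)) =
      log B + (log (2 * π) + log k + log p + log q) / 2 := by
    rw [log_mul hB.ne' (by positivity), log_sqrt (by positivity),
      log_mul (by positivity) hq.ne', log_mul (by positivity) hp.ne', log_mul h2π.ne' hk.ne']
  have hk1 : log (1 + 1 / k) = log (k + 1) - log k := by
    rw [← log_div (by positivity) hk.ne']; congr 1; field_simp
  rw [log_sqrt (by positivity), hS, hT, hR, hk1]
  ring

theorem abs_sqrt_div_mul_sub_rpow_le {k B p q M : ℝ} (hk : 0 < k) (hB : 0 < B) (hp : 0 < p)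
    (hq : 0 < q) (hM : 1 + M ≤ k) (hBM : |log (B * √(2 * π * k * p * q))| ≤ M / k) :
    |√((k + 1) / (2 * π) * B) - k ^ ((1 : ℝ) / 4) /
        ((2 * π) ^ ((3 : ℝ) / 4) * (p * q) ^ ((1 : ℝ) / 4))| ≤
      (1 + M) / ((2 * π) ^ ((3 : ℝ) / 4) * (p * q) ^ ((1 : ℝ) / 4)) * k ^ (-(3 : ℝ) / 4) := by
  have hlog1 : |log (1 + 1 / k)| ≤ 1 / k := by
    rw [abs_of_nonneg (log_nonneg (by simp [hk.le]))]
    linarith [log_le_sub_one_of_pos (show 0 < 1 + 1 / k by positivity)]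
  have hlog : |log √((k + 1) / (2 * π) * B) - log (k ^ ((1 : ℝ) / 4) /
      ((2 * π) ^ ((3 : ℝ) / 4) * (p * q) ^ ((1 : ℝ) / 4)))| ≤ (1 + M) / (2 * k) := by
    rw [log_sqrt_div_mul_sub_log_rpow hk hB hp hq, abs_div, abs_two]
    calc _ ≤ (1 / k + M / k) / 2 := by gcongr; exact (abs_add_le _ _).trans (add_le_add hlog1 hBM)
      _ = _ := by field_simp
  calc _ ≤ 2 * ((1 + M) / (2 * k)) * (k ^ ((1 : ℝ) / 4) /
          ((2 * π) ^ ((3 : ℝ) / 4) * (p * q) ^ ((1 : ℝ) / 4))) :=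
        abs_sub_le_of_abs_log_sub_log_le (by positivity) (by positivity) hlog
          (by rw [div_le_one (by positivity)]; linarith)
    _ = _ := by
      rw [show -(3 : ℝ) / 4 = 1 / 4 - 1 by norm_num, rpow_sub_one hk.ne']
      field_simp [hk.le]

/-- Leading asymptotics of the pointwise norm of the monomial section on the level set
`{H = E}`: if `E ∈ (0,1)` and `l(k)` stays within a bounded distance of `k·E`, then
`√((k+1)/(2π)·C(k,l(k))·E^{l(k)}·(1−E)^{k−l(k)})
  = k^{1/4}/((2π)^{3/4}·(E(1−E))^{1/4}) + O(k^{−3/4})`. -/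
theorem monomial_section_norm_on_level_set (E : ℝ) (hE : E ∈ Set.Ioo (0 : ℝ) 1)
    (l : ℕ → ℕ) (hl : ∀ k, l k ≤ k)
    (hbd : ∃ C > 0, ∀ k : ℕ, |(l k : ℝ) - k * E| ≤ C) :
    ∃ C' > 0, ∃ k₀ : ℕ, ∀ k ≥ k₀,
      |Real.sqrt (((k : ℝ) + 1) / (2 * Real.pi) * (Nat.choose k (l k) : ℝ) *
            E ^ (l k) * (1 - E) ^ (k - l k)) -
          (k : ℝ) ^ ((1 : ℝ) / 4) /
            ((2 * Real.pi) ^ ((3 : ℝ) / 4) * (E * (1 - E)) ^ ((1 : ℝ) / 4))|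
        ≤ C' * (k : ℝ) ^ (-(3 : ℝ) / 4) := by
  obtain ⟨hE0, hE1⟩ := hE
  have hE1' : 0 < 1 - E := sub_pos.2 hE1
  obtain ⟨C, hC, hdev⟩ := hbd
  set M := 1 / 12 + (1 / 6 + C + C ^ 2) / (E * (1 - E))
  have hM : 0 < M := by positivity
  refine ⟨(1 + M) / ((2 * π) ^ ((3 : ℝ) / 4) * (E * (1 - E)) ^ ((1 : ℝ) / 4)), by positivity, ?_⟩
  have hlarge : ∀ᶠ k : ℕ in atTop, 2 * C < k * E ∧ 2 * C < k * (1 - E) ∧ 1 + M ≤ k :=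
    ((tendsto_natCast_atTop_atTop.atTop_mul_const hE0).eventually_gt_atTop _).and <|
      ((tendsto_natCast_atTop_atTop.atTop_mul_const hE1').eventually_gt_atTop _).and <|
        tendsto_natCast_atTop_atTop.eventually_ge_atTop _
  obtain ⟨k₀, hk₀⟩ := eventually_atTop.1 hlarge
  refine ⟨k₀, fun k hk ↦ ?_⟩
  obtain ⟨hCE, hCE', hMk⟩ := hk₀ k hk
  simp only [mul_assoc (((k : ℝ) + 1) / (2 * π))]
  exact abs_sqrt_div_mul_sub_rpow_le (by linarith) (by have := Nat.choose_pos (hl k); positivity)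
    hE0 hE1' hMk (abs_log_choose_mul_pow_mul_pow_mul_sqrt_le (hl k) hE0 hE1 (hdev k) hCE hCE')
end
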